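/- Let n ≤ m, A ∈ Mat_{n×m}(ℚ_p) nonsingular, and B ∈ Mat_m(ℚ_p) invertible with all singular numbers nonnegative (equivalently, B has entries in ℤ_p). Then for each 1 ≤ i ≤ n, the i-th singular number of AB is at least the i-th singular number of A. Similarly, if C ∈ Mat_n(ℚ_p) is invertible with all singular numbers nonnegative, then SN(CA)_i ≥ SN(A)_i for each i. -/

import Mathlib

open Matrix

noncomputable def pDiag (p : ℕ) [Fact p.Prime] (n m : ℕ) (lam : Fin n → ℤ) :
    Matrix (Fin n) (Fin m) ℚ_[p] :=
  Matrix.of fun i j => if (i : ℕ) = (j : ℕ) then (p : ℚ_[p]) ^ (lam i) else 0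

noncomputable def intMap {p : ℕ} [Fact p.Prime] {n m : ℕ}
    (M : Matrix (Fin n) (Fin m) ℤ_[p]) : Matrix (Fin n) (Fin m) ℚ_[p] :=
  M.map (fun x => (x : ℚ_[p]))

/-- `lam` is the tuple of singular numbers of `A`. -/
def IsSNF (p : ℕ) [Fact p.Prime] {n m : ℕ} (A : Matrix (Fin n) (Fin m) ℚ_[p])
    (lam : Fin n → ℤ) : Prop :=
  Antitone lam ∧ ∃ (U : Matrix (Fin n) (Fin n) ℤ_[p]) (V : Matrix (Fin m) (Fin m) ℤ_[p]),
    IsUnit U ∧ IsUnit V ∧ A = intMap U * pDiag p n m lam * intMap V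

open Classical in
noncomputable def pval {p : ℕ} [Fact p.Prime] (x : ℚ_[p]) : WithTop ℤ :=
  if x = 0 then ⊤ else (x.valuation : WithTop ℤ)

noncomputable def minorInf {p : ℕ} [Fact p.Prime] {n m : ℕ}
    (A : Matrix (Fin n) (Fin m) ℚ_[p]) (k : ℕ) : WithTop ℤ :=
  ⨅ (r : Fin k ↪ Fin n) (c : Fin k ↪ Fin m), pval ((A.submatrix r c).det)

/-!
Write `A = U D_λ V` and `AB = U' D_μ V'` in Smith normal form. As `B` is integral, this gives
`X D_μ = D_λ Y` with `X = U⁻¹ U'` a unit and `Y = V B V'⁻¹` integral, i.e.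
`X_ab p^(μ_b) = p^(λ_a) Y_ab`. If `μ_i < λ_i`, then `X_ab` is divisible by `p` whenever
`a ≤ i ≤ b`: an `(i+1) × (n-i)` block vanishing mod `p`, which forces `det X ≡ 0 mod p`.
For `CA` the same identity arises with the unit on the `m × m` side; there the `m - n` zero
columns of `D_λ` enlarge the block enough.
-/

open Finset

theorem Fintype.card_lt_card_add_card_of_union_eq_univ {ι : Type*} [Fintype ι] [DecidableEq ι]
    {S T : Finset ι} (hST : S ∪ T = univ) (hne : (S ∩ T).Nonempty) :
    Fintype.card ι < #S + #T := by
  rw [← card_union_add_card_inter, hST, card_univ]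
  have := hne.card_pos
  omega

namespace Matrix

variable {ι R : Type*} [Fintype ι] [DecidableEq ι] [CommRing R]

/-- If the zero block `S × T` is too large, every permutation meets it. -/
theorem det_eq_zero_of_card_lt_of_forall_apply_eq_zero (M : Matrix ι ι R) {S T : Finset ι}
    (hST : Fintype.card ι < #S + #T) (hM : ∀ r ∈ S, ∀ c ∈ T, M r c = 0) : M.det = 0 := by
  rw [det_apply]
  refine sum_eq_zero fun σ _ => ?_
  obtain ⟨c, hc, hσc⟩ : ∃ c ∈ T, σ c ∈ S := by
    by_contra! h
    have hdisj : Disjoint S (T.image σ) := by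
      simpa [disjoint_right] using h
    have := card_le_univ (S ∪ T.image σ)
    rw [card_union_of_disjoint hdisj, card_image_of_injective _ σ.injective] at this
    omega
  rw [prod_eq_zero (f := fun i => M (σ i) i) (mem_univ c) (hM _ hσc _ hc), smul_zero]

theorem exists_isUnit_apply_of_isUnit [IsLocalRing R] {M : Matrix ι ι R} (hM : IsUnit M)
    {S T : Finset ι} (hST : Fintype.card ι < #S + #T) : ∃ r ∈ S, ∃ c ∈ T, IsUnit (M r c) := by
  by_contra! h
  have hdet : IsUnit M.det := (isUnit_iff_isUnit_det M).mp hM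
  have hres : ((IsLocalRing.residue R).mapMatrix M).det = 0 :=
    det_eq_zero_of_card_lt_of_forall_apply_eq_zero _ hST fun r hr c hc =>
      (IsLocalRing.residue_eq_zero_iff _).mpr (h r hr c hc)
  rw [← RingHom.map_det] at hres
  exact (hdet.map _).ne_zero hres

end Matrix

section Padic

variable {p : ℕ} [Fact p.Prime]

theorem PadicInt.not_isUnit_of_coe_mul_zpow_eq {x y : ℤ_[p]} {k l : ℤ} (hkl : k < l)
    (h : (x : ℚ_[p]) * (p : ℚ_[p]) ^ k = (p : ℚ_[p]) ^ l * y) : ¬ IsUnit x := by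
  rw [PadicInt.isUnit_iff]
  intro hx
  have hp : (1 : ℝ) < p := mod_cast (Fact.out : p.Prime).one_lt
  have hnorm := congr_arg norm h
  simp only [norm_mul, Padic.norm_p_zpow, PadicInt.padic_norm_e_of_padicInt, hx, one_mul] at hnorm
  have : (p : ℝ) ^ (-k) ≤ (p : ℝ) ^ (-l) := by
    rw [hnorm]
    exact mul_le_of_le_one_right (by positivity) (PadicInt.norm_le_one y)
  exact this.not_gt (zpow_lt_zpow_right₀ hp (by omega))

theorem intMap_mul {n m k : ℕ} (M : Matrix (Fin n) (Fin m) ℤ_[p])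
    (N : Matrix (Fin m) (Fin k) ℤ_[p]) : intMap (M * N) = intMap M * intMap N :=
  Matrix.map_mul (f := PadicInt.Coe.ringHom)

theorem intMap_one {n : ℕ} : intMap (1 : Matrix (Fin n) (Fin n) ℤ_[p]) = 1 :=
  Matrix.map_one _ PadicInt.coe_zero PadicInt.coe_one

theorem pDiag_eq_intMap_of_nonneg {n m : ℕ} {lam : Fin n → ℤ} (hlam : ∀ i, 0 ≤ lam i) :
    pDiag p n m lam = intMap (Matrix.of fun i j =>
      if (i : ℕ) = (j : ℕ) then (p : ℤ_[p]) ^ (lam i).toNat else 0) := by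
  ext i j
  simp only [pDiag, intMap, Matrix.map_apply, Matrix.of_apply]
  split_ifs
  · rw [PadicInt.coe_pow, PadicInt.coe_natCast, ← zpow_natCast, Int.toNat_of_nonneg (hlam i)]
  · rfl

theorem IsSNF.exists_eq_intMap {n m : ℕ} {A : Matrix (Fin n) (Fin m) ℚ_[p]} {lam : Fin n → ℤ}
    (hA : IsSNF p A lam) (hlam : ∀ i, 0 ≤ lam i) : ∃ A', A = intMap A' := by
  obtain ⟨-, U, V, -, -, rfl⟩ := hA
  exact ⟨_, by rw [pDiag_eq_intMap_of_nonneg hlam, ← intMap_mul, ← intMap_mul]⟩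

section pDiag

variable {n m : ℕ} (hnm : n ≤ m)

theorem mul_pDiag_apply_castLE {k : ℕ} (M : Matrix (Fin k) (Fin n) ℚ_[p]) (lam : Fin n → ℤ)
    (a : Fin k) (b : Fin n) :
    (M * pDiag p n m lam) a (Fin.castLE hnm b) = M a b * (p : ℚ_[p]) ^ lam b := by
  simp only [mul_apply, pDiag, of_apply, Fin.val_castLE, Fin.val_inj, mul_ite, mul_zero,
    sum_ite_eq', mem_univ, if_true]

theorem mul_pDiag_apply_of_le {k : ℕ} (M : Matrix (Fin k) (Fin n) ℚ_[p]) (lam : Fin n → ℤ)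
    (a : Fin k) {j : Fin m} (hj : n ≤ (j : ℕ)) : (M * pDiag p n m lam) a j = 0 :=
  (mul_apply).trans <| sum_eq_zero fun b _ => by
    simp only [pDiag, of_apply, if_neg (show (b : ℕ) ≠ j by omega), mul_zero]

theorem pDiag_mul_apply {k : ℕ} (M : Matrix (Fin m) (Fin k) ℚ_[p]) (lam : Fin n → ℤ)
    (a : Fin n) (j : Fin k) :
    (pDiag p n m lam * M) a j = (p : ℚ_[p]) ^ lam a * M (Fin.castLE hnm a) j := by
  rw [mul_apply, sum_eq_single (Fin.castLE hnm a)]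
  · simp [pDiag]
  · intro b _ hb
    rw [pDiag, of_apply, if_neg fun h => hb (Fin.ext h.symm), zero_mul]
  · simp

end pDiag

theorem intMap_mul_pDiag_eq_pDiag_mul_of_eq {n m : ℕ} {U U' : Matrix (Fin n) (Fin n) ℤ_[p]}
    {V V' : Matrix (Fin m) (Fin m) ℤ_[p]} {lam mu : Fin n → ℤ} (hU : IsUnit U) (hV' : IsUnit V')
    (h : intMap U' * pDiag p n m mu * intMap V' = intMap U * pDiag p n m lam * intMap V) :
    intMap (U⁻¹ * U') * pDiag p n m mu = pDiag p n m lam * intMap (V * V'⁻¹) := by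
  have hUinv : intMap U⁻¹ * intMap U = 1 := by
    rw [← intMap_mul, nonsing_inv_mul _ ((isUnit_iff_isUnit_det U).mp hU), intMap_one]
  have hV'inv : intMap V' * intMap V'⁻¹ = 1 := by
    rw [← intMap_mul, mul_nonsing_inv _ ((isUnit_iff_isUnit_det V').mp hV'), intMap_one]
  calc intMap (U⁻¹ * U') * pDiag p n m mu
      = intMap U⁻¹ * (intMap U' * pDiag p n m mu * intMap V') * intMap V'⁻¹ := by
        simp only [intMap_mul, Matrix.mul_assoc, hV'inv, Matrix.mul_one]
    _ = intMap U⁻¹ * (intMap U * pDiag p n m lam * intMap V) * intMap V'⁻¹ := by rw [h]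
    _ = pDiag p n m lam * intMap (V * V'⁻¹) := by
        simp only [intMap_mul, ← Matrix.mul_assoc, hUinv, Matrix.one_mul]

section Comparison

variable {n m : ℕ} {X : Matrix (Fin n) (Fin n) ℤ_[p]}
  {Y : Matrix (Fin m) (Fin m) ℤ_[p]} {lam mu : Fin n → ℤ}

theorem coe_mul_zpow_eq_of_intMap_mul_pDiag_eq (hnm : n ≤ m)
    (h : intMap X * pDiag p n m mu = pDiag p n m lam * intMap Y) (a b : Fin n) :
    (X a b : ℚ_[p]) * (p : ℚ_[p]) ^ mu b
      = (p : ℚ_[p]) ^ lam a * Y (Fin.castLE hnm a) (Fin.castLE hnm b) := by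
  have := congr_fun₂ h a (Fin.castLE hnm b)
  rwa [mul_pDiag_apply_castLE, pDiag_mul_apply] at this

theorem le_of_intMap_mul_pDiag_eq_of_isUnit_left (hnm : n ≤ m) (hX : IsUnit X)
    (hlam : Antitone lam) (hmu : Antitone mu)
    (h : intMap X * pDiag p n m mu = pDiag p n m lam * intMap Y)
    (i : Fin n) : lam i ≤ mu i := by
  by_contra! hi
  have hST : Iic i ∪ Ici i = univ := by
    ext j
    simpa using le_total j i
  obtain ⟨a, ha, b, hb, hab⟩ := exists_isUnit_apply_of_isUnit hX
    (Fintype.card_lt_card_add_card_of_union_eq_univ hST ⟨i, by simp⟩)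
  rw [mem_Iic] at ha
  rw [mem_Ici] at hb
  exact PadicInt.not_isUnit_of_coe_mul_zpow_eq ((hmu hb).trans_lt (hi.trans_le (hlam ha)))
    (coe_mul_zpow_eq_of_intMap_mul_pDiag_eq hnm h a b) hab

theorem le_of_intMap_mul_pDiag_eq_of_isUnit_right (hnm : n ≤ m) (hY : IsUnit Y)
    (hlam : Antitone lam) (hmu : Antitone mu)
    (h : intMap X * pDiag p n m mu = pDiag p n m lam * intMap Y)
    (i : Fin n) : mu i ≤ lam i := by
  by_contra! hi
  -- In the rows `i ≤ r < n`, `Y` is a nonunit in the columns `c ≤ i` and zero in `c ≥ n`.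
  let S : Finset (Fin m) := {r | (i : ℕ) ≤ r ∧ (r : ℕ) < n}
  let T : Finset (Fin m) := {c | (c : ℕ) ≤ i ∨ n ≤ (c : ℕ)}
  have hST : S ∪ T = univ := by
    ext j
    simp only [S, T, mem_union, mem_filter, mem_univ, true_and, iff_true]
    omega
  obtain ⟨r, hr, c, hc, hrc⟩ := exists_isUnit_apply_of_isUnit hY
    (Fintype.card_lt_card_add_card_of_union_eq_univ hST ⟨Fin.castLE hnm i, by simp [S, T]⟩)
  simp only [S, T, mem_filter, mem_univ, true_and] at hr hc
  obtain ⟨a, rfl⟩ : ∃ a : Fin n, Fin.castLE hnm a = r := ⟨⟨r, hr.2⟩, rfl⟩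
  by_cases hcn : (c : ℕ) < n
  · obtain ⟨b, rfl⟩ : ∃ b : Fin n, Fin.castLE hnm b = c := ⟨⟨c, hcn⟩, rfl⟩
    have hb : b ≤ i := hc.resolve_right hcn.not_ge
    refine PadicInt.not_isUnit_of_coe_mul_zpow_eq (x := Y _ _) (y := X a b)
      ((hlam (show i ≤ a from hr.1)).trans_lt (hi.trans_le (hmu hb))) ?_ hrc
    rw [mul_comm, eq_comm, mul_comm (_ ^ _)]
    exact coe_mul_zpow_eq_of_intMap_mul_pDiag_eq hnm h a b
  · have := congr_fun₂ h a c
    rw [mul_pDiag_apply_of_le _ _ _ (not_lt.mp hcn), pDiag_mul_apply hnm] at this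
    have hp : (p : ℚ_[p]) ≠ 0 := Nat.cast_ne_zero.mpr (Fact.out : p.Prime).ne_zero
    have hY0 : (Y (Fin.castLE hnm a) c : ℚ_[p]) = 0 :=
      (mul_eq_zero.mp this.symm).resolve_left (zpow_ne_zero _ hp)
    exact not_isUnit_zero (PadicInt.coe_eq_zero.mp hY0 ▸ hrc)

end Comparison

end Padic

theorem sn_mono_mul_general (p n m : ℕ) [Fact p.Prime] (hnm : n ≤ m)
    (A : Matrix (Fin n) (Fin m) ℚ_[p])
    (lam : Fin n → ℤ) (hlam : IsSNF p A lam) :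
    (∀ (B : Matrix (Fin m) (Fin m) ℚ_[p]) (beta : Fin m → ℤ),
      IsSNF p B beta → (∀ i, 0 ≤ beta i) →
      ∀ mu : Fin n → ℤ, IsSNF p (A * B) mu → ∀ i, lam i ≤ mu i) ∧
    (∀ (C : Matrix (Fin n) (Fin n) ℚ_[p]) (gamma : Fin n → ℤ),
      IsSNF p C gamma → (∀ i, 0 ≤ gamma i) →
      ∀ mu : Fin n → ℤ, IsSNF p (C * A) mu → ∀ i, lam i ≤ mu i) := by
  obtain ⟨hlam, U₁, V₁, hU₁, hV₁, rfl⟩ := hlam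
  refine ⟨fun B beta hB hbeta mu hmu => ?_, fun C gamma hC hgamma mu hmu => ?_⟩
  · obtain ⟨B', rfl⟩ := hB.exists_eq_intMap hbeta
    obtain ⟨hmu, U₂, V₂, hU₂, hV₂, hAB⟩ := hmu
    have key := intMap_mul_pDiag_eq_pDiag_mul_of_eq (V := V₁ * B') hU₁ hV₂
      (by rw [← hAB, intMap_mul, Matrix.mul_assoc])
    exact le_of_intMap_mul_pDiag_eq_of_isUnit_left hnm
      ((isUnit_nonsing_inv_iff.mpr hU₁).mul hU₂) hlam hmu key
  · obtain ⟨C', rfl⟩ := hC.exists_eq_intMap hgamma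
    obtain ⟨hmu, U₂, V₂, hU₂, hV₂, hCA⟩ := hmu
    have key := intMap_mul_pDiag_eq_pDiag_mul_of_eq (U' := C' * U₁) hU₂ hV₁
      (by rw [← hCA, intMap_mul, Matrix.mul_assoc, Matrix.mul_assoc, Matrix.mul_assoc])
    exact le_of_intMap_mul_pDiag_eq_of_isUnit_right hnm
      (hV₂.mul (isUnit_nonsing_inv_iff.mpr hV₁)) hmu hlam key

/-- Multiplying by a square matrix with nonnegative singular numbers weakly
increases each singular number. -/
theorem sn_mono_mul (p n m : ℕ) [Fact p.Prime] (hnm : n ≤ m)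
    (A : Matrix (Fin n) (Fin m) ℚ_[p]) (hA : A.rank = n)
    (lam : Fin n → ℤ) (hlam : IsSNF p A lam) :
    (∀ (B : Matrix (Fin m) (Fin m) ℚ_[p]) (beta : Fin m → ℤ),
      IsSNF p B beta → (∀ i, 0 ≤ beta i) →
      ∀ mu : Fin n → ℤ, IsSNF p (A * B) mu → ∀ i, lam i ≤ mu i) ∧
    (∀ (C : Matrix (Fin n) (Fin n) ℚ_[p]) (gamma : Fin n → ℤ),
      IsSNF p C gamma → (∀ i, 0 ≤ gamma i) →
      ∀ mu : Fin n → ℤ, IsSNF p (C * A) mu → ∀ i, lam i ≤ mu i) :=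
  sn_mono_mul_general p n m hnm A lam hlam
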